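/- For any real numbers y ≥ 2 and Z ≥ 2, and any Dirichlet character χ with |χ(n)| ≤ 1, the sum over y-friable integers n > Z satisfies |∑_{n>Z, P⁺(n)≤y} χ(n)e(nα)/n| ≤ ∑_{n>Z, P⁺(n)≤y} 1/n, uniformly in α; moreover if Z = x^{21/40} and 2 ≤ y ≤ (log x)², this last sum is ≪ e^{−√(log y)}. -/

import Mathlib

/-!
The first bound is the triangle inequality, since `|χ(n) e(nα)| ≤ 1`.

The second is Rankin's trick with `σ = 1 - 1/(2 log y)`: for `n > Z` we have
`1/n ≤ Z^{σ-1} n^{-σ}`, and the sum of `n^{-σ}` over `y`-friable `n` is the Euler product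
`∏_{p ≤ y} (1 - p^{-σ})⁻¹`. Since `p^{1-σ} ≤ e^{1/2}` for `p ≤ y`, each factor is at most
`exp(10/p)`, so the product is at most `exp(10 (1 + log y))`, whereas
`Z^{σ-1} = exp(-(21/80) log x / log y)` with `log y ≤ 2 log log x`, which wins by far.
-/

noncomputable def e (t : ℝ) : ℂ := Complex.exp (2 * Real.pi * Complex.I * t)

section

open Real Set

lemma norm_e (t : ℝ) : ‖e t‖ = 1 := by
  have : 2 * π * Complex.I * t = ((2 * π * t : ℝ) : ℂ) * Complex.I := by push_cast; ring
  rw [e, this, Complex.norm_exp_ofReal_mul_I]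

noncomputable def natRpowNegHom (σ : ℝ) : ℕ →* ℝ where
  toFun n := (n : ℝ) ^ (-σ)
  map_one' := by simp
  map_mul' m n := by push_cast; exact mul_rpow m.cast_nonneg n.cast_nonneg

lemma hasSum_indicator_smoothNumbers_rpow_neg {σ : ℝ} (hσ : 0 < σ) (N : ℕ) :
    HasSum (N.smoothNumbers.indicator fun n : ℕ => (n : ℝ) ^ (-σ))
      (∏ p ∈ N.primesBelow, (1 - (p : ℝ) ^ (-σ))⁻¹) := by
  have hlt {p : ℕ} (hp : p.Prime) : ‖natRpowNegHom σ p‖ < 1 := by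
    change ‖(p : ℝ) ^ (-σ)‖ < 1
    rw [norm_of_nonneg (rpow_nonneg p.cast_nonneg _)]
    exact rpow_lt_one_of_one_lt_of_neg (by exact_mod_cast hp.one_lt) (neg_neg_of_pos hσ)
  exact hasSum_subtype_iff_indicator.mp
    (EulerProduct.summable_and_hasSum_smoothNumbers_prod_primesBelow_geometric hlt N).2

def friableAbove (y Z : ℝ) : Set ℕ :=
  {n : ℕ | Z < (n : ℝ) ∧ ∀ p : ℕ, p.Prime → p ∣ n → (p : ℝ) ≤ y}

lemma friableAbove_subset_smoothNumbers (y Z : ℝ) :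
    friableAbove y Z ⊆ (⌊y⌋₊ + 1).smoothNumbers := fun _ hn =>
  Nat.mem_smoothNumbers'.mpr fun p hp hpn => Nat.lt_succ_of_le (Nat.le_floor (hn.2 p hp hpn))

lemma summable_indicator_friableAbove_one_div (y Z : ℝ) :
    Summable ((friableAbove y Z).indicator fun n : ℕ => 1 / (n : ℝ)) := by
  refine (hasSum_indicator_smoothNumbers_rpow_neg one_pos (⌊y⌋₊ + 1)).summable.of_nonneg_of_le
    (indicator_nonneg fun _ _ => by positivity) fun n => ?_
  simp only [rpow_neg_one, one_div]
  exact indicator_le_indicator_of_subset (friableAbove_subset_smoothNumbers y Z)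
    (fun _ => by positivity) n

lemma norm_tsum_indicator_friableAbove_le (y Z : ℝ) {a : ℕ → ℂ} (ha : ∀ n, ‖a n‖ ≤ 1) :
    ‖∑' n, (friableAbove y Z).indicator (fun n : ℕ => a n / n) n‖ ≤
      ∑' n, (friableAbove y Z).indicator (fun n : ℕ => 1 / (n : ℝ)) n := by
  refine tsum_of_norm_bounded (summable_indicator_friableAbove_one_div y Z).hasSum fun n => ?_
  rw [norm_indicator_eq_indicator_norm]
  refine indicator_le_indicator ?_
  rw [norm_div, Complex.norm_natCast]
  exact div_le_div_of_nonneg_right (ha n) n.cast_nonneg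

lemma one_div_le_rpow_sub_one_mul_rpow_neg {Z n σ : ℝ} (hZ : 0 < Z) (hZn : Z < n) (hσ : σ ≤ 1) :
    1 / n ≤ Z ^ (σ - 1) * n ^ (-σ) := by
  have hn : 0 < n := hZ.trans hZn
  calc 1 / n = n ^ (σ - 1) * n ^ (-σ) := by
        rw [← rpow_add hn, show σ - 1 + -σ = -1 by ring, rpow_neg_one, one_div]
    _ ≤ Z ^ (σ - 1) * n ^ (-σ) :=
        mul_le_mul_of_nonneg_right (rpow_le_rpow_of_nonpos hZ hZn.le (by linarith))
          (rpow_nonneg hn.le _)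

theorem tsum_indicator_friableAbove_le_rankin {y Z σ : ℝ} (hZ : 0 < Z) (hσ0 : 0 < σ)
    (hσ1 : σ ≤ 1) :
    ∑' n, (friableAbove y Z).indicator (fun n : ℕ => 1 / (n : ℝ)) n ≤
      Z ^ (σ - 1) * ∏ p ∈ (⌊y⌋₊ + 1).primesBelow, (1 - (p : ℝ) ^ (-σ))⁻¹ := by
  refine (le_norm_self _).trans <| tsum_of_norm_bounded
    ((hasSum_indicator_smoothNumbers_rpow_neg hσ0 _).mul_left _) fun n => ?_
  by_cases hn : n ∈ friableAbove y Z
  · rw [indicator_of_mem hn, indicator_of_mem (friableAbove_subset_smoothNumbers y Z hn),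
      norm_of_nonneg (by positivity)]
    exact one_div_le_rpow_sub_one_mul_rpow_neg hZ hn.1 hσ1
  · rw [indicator_of_notMem hn, norm_zero]
    exact mul_nonneg (rpow_nonneg hZ.le _)
      (indicator_nonneg (fun _ _ => rpow_nonneg (Nat.cast_nonneg _) _) n)

lemma exp_half_le : exp (1 / 2) ≤ 5 / 3 := by
  have hsq : exp (1 / 2) ^ 2 = exp 1 := by rw [← exp_nat_mul]; norm_num
  nlinarith [exp_one_lt_d9, exp_pos (1 / 2)]

lemma rpow_neg_one_sub_inv_two_log_le {p y : ℝ} (hp : 0 < p) (hpy : p ≤ y) (hy : 1 < y) :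
    p ^ (-(1 - 1 / (2 * log y))) ≤ 5 / 3 * p⁻¹ := by
  have hlogy : 0 < log y := log_pos hy
  have hexp : log p * (1 / (2 * log y)) ≤ 1 / 2 := by
    rw [← div_eq_mul_one_div, div_le_iff₀ (by positivity)]
    linarith [log_le_log hp hpy]
  calc p ^ (-(1 - 1 / (2 * log y))) = p⁻¹ * p ^ (1 / (2 * log y)) := by
        rw [neg_sub, sub_eq_neg_add, rpow_add hp, rpow_neg_one]
    _ ≤ p⁻¹ * (5 / 3) := by
        gcongr
        rw [rpow_def_of_pos hp]
        exact (exp_le_exp.mpr hexp).trans exp_half_le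
    _ = 5 / 3 * p⁻¹ := mul_comm _ _

lemma inv_one_sub_le_exp {t : ℝ} (ht0 : 0 ≤ t) (ht : t ≤ 5 / 6) : (1 - t)⁻¹ ≤ exp (6 * t) := by
  have h1t : 0 < 1 - t := by linarith
  calc (1 - t)⁻¹ ≤ 1 + 6 * t := by rw [inv_le_iff_one_le_mul₀ h1t]; nlinarith
    _ ≤ exp (6 * t) := by linarith [add_one_le_exp (6 * t)]

lemma sum_primesBelow_floor_inv_le {y : ℝ} (hy : 1 ≤ y) :
    ∑ p ∈ (⌊y⌋₊ + 1).primesBelow, (p : ℝ)⁻¹ ≤ 1 + log y := by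
  have hsub : (⌊y⌋₊ + 1).primesBelow ⊆ Finset.Icc 1 ⌊y⌋₊ := fun p hp => by
    have := Nat.lt_of_mem_primesBelow hp
    exact Finset.mem_Icc.mpr ⟨(Nat.prime_of_mem_primesBelow hp).one_lt.le, by omega⟩
  calc ∑ p ∈ (⌊y⌋₊ + 1).primesBelow, (p : ℝ)⁻¹
      ≤ ∑ i ∈ Finset.Icc 1 ⌊y⌋₊, (i : ℝ)⁻¹ :=
        Finset.sum_le_sum_of_subset_of_nonneg hsub fun _ _ _ => by positivity
    _ = harmonic ⌊y⌋₊ := by rw [harmonic_eq_sum_Icc]; push_cast; rfl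
    _ ≤ 1 + log y := harmonic_floor_le_one_add_log y hy

lemma prod_primesBelow_floor_inv_one_sub_rpow_le {y : ℝ} (hy : 2 ≤ y) :
    ∏ p ∈ (⌊y⌋₊ + 1).primesBelow, (1 - (p : ℝ) ^ (-(1 - 1 / (2 * log y))))⁻¹ ≤
      exp (10 * (1 + log y)) := by
  have hterm : ∀ p ∈ (⌊y⌋₊ + 1).primesBelow,
      0 ≤ (p : ℝ) ^ (-(1 - 1 / (2 * log y))) ∧
        (p : ℝ) ^ (-(1 - 1 / (2 * log y))) ≤ 5 / 3 * (p : ℝ)⁻¹ ∧ 5 / 3 * (p : ℝ)⁻¹ ≤ 5 / 6 := by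
    intro p hp
    have hp2 : (2 : ℝ) ≤ p := by exact_mod_cast (Nat.prime_of_mem_primesBelow hp).two_le
    have hpy : (p : ℝ) ≤ y :=
      (Nat.cast_le.mpr (Nat.lt_succ_iff.mp (Nat.lt_of_mem_primesBelow hp))).trans
        (Nat.floor_le (by linarith))
    refine ⟨rpow_nonneg (by linarith) _,
      rpow_neg_one_sub_inv_two_log_le (by linarith) hpy (by linarith), ?_⟩
    rw [← div_eq_mul_inv, div_le_iff₀ (by linarith)]
    linarith
  calc ∏ p ∈ (⌊y⌋₊ + 1).primesBelow, (1 - (p : ℝ) ^ (-(1 - 1 / (2 * log y))))⁻¹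
      ≤ ∏ p ∈ (⌊y⌋₊ + 1).primesBelow, exp (10 * (p : ℝ)⁻¹) := by
        refine Finset.prod_le_prod (fun p hp => ?_) fun p hp => ?_
        · have := hterm p hp
          exact inv_nonneg.mpr (by linarith)
        · obtain ⟨h0, hle, hsmall⟩ := hterm p hp
          exact (inv_one_sub_le_exp h0 (hle.trans hsmall)).trans
            (exp_le_exp.mpr (by linarith))
    _ = exp (10 * ∑ p ∈ (⌊y⌋₊ + 1).primesBelow, (p : ℝ)⁻¹) := by
        rw [Finset.mul_sum, exp_sum]
    _ ≤ exp (10 * (1 + log y)) := by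
        gcongr; exact sum_primesBelow_floor_inv_le (by linarith)

lemma add_sqrt_le_div_of_le_two_mul_log {L v : ℝ} (hL : exp 1000 ≤ L) (hv : 0 < v)
    (hvL : v ≤ 2 * log L) :
    10 * (1 + v) + √v ≤ 21 / 80 * L / v := by
  set u := log L
  have hu : 1000 ≤ u := by simpa using log_le_log (exp_pos _) hL
  have hcube : u ^ 3 / 6 ≤ L := by
    have hexp : exp u = L := exp_log ((exp_pos _).trans_le hL)
    have := pow_div_factorial_le_exp u (by linarith) 3
    norm_num [Nat.factorial, hexp] at this
    exact this
  have hsqrt : √v ≤ (1 + v) / 2 := by nlinarith [sq_sqrt hv.le, sq_nonneg (√v - 1)]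
  -- after multiplying by `v` the left side is `O(u²)`, while `L ≥ u³ / 6`
  rw [le_div_iff₀ hv]
  nlinarith [mul_le_mul_of_nonneg_left hsqrt hv.le, mul_le_mul_of_nonneg_left hvL hv.le,
    mul_le_mul_of_nonneg_right hvL (by linarith : 0 ≤ 21 * u + 21 / 2)]

theorem tsum_indicator_friableAbove_rpow_le {x y : ℝ} (hx : exp (exp 1000) ≤ x) (hy : 2 ≤ y)
    (hyx : y ≤ log x ^ 2) :
    ∑' n, (friableAbove y (x ^ ((21 : ℝ) / 40))).indicator (fun n : ℕ => 1 / (n : ℝ)) n ≤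
      exp (-√(log y)) := by
  have hx0 : 0 < x := (exp_pos _).trans_le hx
  have hlogx : exp 1000 ≤ log x := by simpa using log_le_log (exp_pos _) hx
  have hlogy : 1 / 2 < log y := by
    linarith [log_two_gt_d9, log_le_log (by norm_num : (0 : ℝ) < 2) hy]
  have hlogy_le : log y ≤ 2 * log (log x) := by
    simpa [log_pow] using log_le_log (by linarith) hyx
  set σ := 1 - 1 / (2 * log y) with hσ
  have hσ0 : 0 < σ := by
    rw [hσ, sub_pos, div_lt_one (by linarith)]; linarith
  have hσ1 : σ ≤ 1 := by
    have : 0 < 1 / (2 * log y) := by positivity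
    linarith
  calc _ ≤ (x ^ ((21 : ℝ) / 40)) ^ (σ - 1) *
          ∏ p ∈ (⌊y⌋₊ + 1).primesBelow, (1 - (p : ℝ) ^ (-σ))⁻¹ :=
        tsum_indicator_friableAbove_le_rankin (rpow_pos_of_pos hx0 _) hσ0 hσ1
    _ ≤ (x ^ ((21 : ℝ) / 40)) ^ (σ - 1) * exp (10 * (1 + log y)) := by
        gcongr; exact prod_primesBelow_floor_inv_one_sub_rpow_le hy
    _ = exp (-(21 / 80 * log x / log y) + 10 * (1 + log y)) := by
        rw [← rpow_mul hx0.le, rpow_def_of_pos hx0, ← exp_add, hσ]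
        congr 1
        field_simp
        ring
    _ ≤ exp (-√(log y)) := by
        have := add_sqrt_le_div_of_le_two_mul_log hlogx (by linarith) hlogy_le
        exact exp_le_exp.mpr (by linarith)

end

/-- The tail of the series over `y`-friable integers `n > Z` is bounded, uniformly in
`α`, by `∑_{n>Z, P⁺(n)≤y} 1/n`; moreover, if `Z = x^{21/40}` and `2 ≤ y ≤ (log x)²`,
this last sum is `≪ e^{-√(log y)}`. -/
theorem stmt_11 :
    ∃ C > 0, ∃ x₀ : ℝ,
      (∀ (y Z : ℝ), 2 ≤ y → 2 ≤ Z → ∀ (q : ℕ) (χ : DirichletCharacter ℂ q) (α : ℝ),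
        ‖∑' n : ℕ, Set.indicator
            {n : ℕ | Z < (n : ℝ) ∧ ∀ p : ℕ, p.Prime → p ∣ n → (p : ℝ) ≤ y}
            (fun n => χ n * e (α * n) / n) n‖ ≤
          ∑' n : ℕ, Set.indicator
            {n : ℕ | Z < (n : ℝ) ∧ ∀ p : ℕ, p.Prime → p ∣ n → (p : ℝ) ≤ y}
            (fun n => 1 / (n : ℝ)) n) ∧
      (∀ (x y : ℝ), x₀ ≤ x → 2 ≤ y → y ≤ (Real.log x) ^ 2 →
        (∑' n : ℕ, Set.indicator
            {n : ℕ | x ^ ((21 : ℝ) / 40) < (n : ℝ) ∧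
              ∀ p : ℕ, p.Prime → p ∣ n → (p : ℝ) ≤ y}
            (fun n => 1 / (n : ℝ)) n) ≤ C * Real.exp (-Real.sqrt (Real.log y))) := by
  refine ⟨1, one_pos, Real.exp (Real.exp 1000), ?_, fun x y hx hy hyx => ?_⟩
  · intro y Z _ _ q χ α
    exact norm_tsum_indicator_friableAbove_le y Z fun n => by
      rw [norm_mul, norm_e, mul_one]
      exact χ.norm_le_one n
  · rw [one_mul]
    exact tsum_indicator_friableAbove_rpow_le hx hy hyx
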